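/- Measure of the non-contact set, first estimate: let Ω ⊂ ℝ^d be a bounded open convex set and 𝒩 = 𝒩ᴵ ∪ 𝒩ᴮ a nodal set with 𝒩ᴵ ⊂ Ω, 𝒩ᴮ ⊂ ∂Ω, and every interior node in the topological interior of conv(𝒩). Let u_h and v_h be convex nodal functions with u_h = v_h on 𝒩ᴮ and u_h ≤ v_h on 𝒩ᴵ, and set f_i := vol(∂u_h(x_i)) and g_i := vol(∂v_h(x_i)) for x_i ∈ 𝒩ᴵ. Fix 0 < ε < 1, put τ := ε/(1−ε), let 𝒞_ε be the contact set of w_ε := u_h − (1−ε)v_h and S_ε := 𝒩ᴵ \ 𝒞_ε. For S ⊆ 𝒩ᴵ define μ(S) := Σ_{x_i∈S} f_i and ν_τ(S) := Σ_{x_i∈S} (f_i^{1/d} + τ^{−1} |g_i^{1/d} − f_i^{1/d}|)^d. Then μ(S_ε) ≤ ν_τ(𝒞_ε) − μ(𝒞_ε). -/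

import Mathlib

open scoped BigOperators RealInnerProductSpace
open MeasureTheory
open scoped Classical

noncomputable section

/-- `ℝ^d` with the Euclidean inner product. -/
abbrev Euc (d : ℕ) := EuclideanSpace ℝ (Fin d)

/-- Subdifferential of a nodal function `u` at a node `z`, relative to the nodal set `N`. -/
def nodalSubdiff {d : ℕ} (N : Finset (Euc d)) (u : Euc d → ℝ) (z : Euc d) : Set (Euc d) :=
  {p | ∀ y ∈ N, u z + ⟪p, y - z⟫ ≤ u y}

/-- A nodal function is convex if its subdifferential is nonempty at every interior node. -/
def IsConvexNodal {d : ℕ} (NI N : Finset (Euc d)) (u : Euc d → ℝ) : Prop :=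
  ∀ z ∈ NI, (nodalSubdiff N u z).Nonempty

/-- The convex envelope of a nodal function: the sup of affine functions lying below `u`
on the nodal set `N`. -/
def convEnv {d : ℕ} (N : Finset (Euc d)) (u : Euc d → ℝ) (x : Euc d) : ℝ :=
  sSup {t : ℝ | ∃ (q : Euc d) (c : ℝ), (∀ y ∈ N, ⟪q, y⟫ + c ≤ u y) ∧ t = ⟪q, x⟫ + c}

/-- Subdifferential of the convex envelope of a nodal function at a node `z`
(supporting slopes over the convex hull of the nodal set). -/
def envSubdiff {d : ℕ} (N : Finset (Euc d)) (u : Euc d → ℝ) (z : Euc d) : Set (Euc d) :=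
  {p | ∀ x ∈ convexHull ℝ (N : Set (Euc d)),
    convEnv N u z + ⟪p, x - z⟫ ≤ convEnv N u x}

/-- The vector in `ℝ^d` associated with an integer vector `e ∈ ℤ^d`. -/
def intVec {d : ℕ} (e : Fin d → ℤ) : Euc d := WithLp.toLp 2 (fun i => (e i : ℝ))

/-- Second-order difference of a nodal function `w` at `z` in direction `e ∈ ℤ^d`,
with nodal spacing `h`. -/
def delta2 {d : ℕ} (h : ℝ) (e : Fin d → ℤ) (w : Euc d → ℝ) (z : Euc d) : ℝ :=
  (w (z + h • intVec e) - 2 * w z + w (z - h • intVec e)) / (‖intVec e‖ ^ 2 * h ^ 2)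

/-!
Scaled by `ε`, every slope `p ∈ ∂u_h(x_i)` at an interior node is a slope of `w_ε` at the interior
node minimizing `w_ε - ε⟪p, ·⟫`: the boundary condition `u_h = v_h` on `𝒩ᴮ` and `u_h ≤ v_h` on `𝒩ᴵ`
make the boundary nodes unable to beat it. A node where `w_ε` has a slope is a contact node, so
`⋃ ∂u_h(x_i) ⊆ ⋃_{𝒞_ε} ε⁻¹ • ∂w_ε(x_j)`, and since distinct `∂u_h(x_i)` overlap only inside
hyperplanes, `μ(𝒩ᴵ) ≤ Σ_{𝒞_ε} |ε⁻¹ • ∂w_ε(x_j)|`. At every node `∂w_ε + (1 - ε) • ∂v_h ⊆ ∂u_h`, so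
the Brunn–Minkowski inequality gives `|∂w_ε|^{1/d} ≤ f^{1/d} - (1 - ε) g^{1/d}`, which rearranges to
`|ε⁻¹ • ∂w_ε| ≤ (f^{1/d} + τ⁻¹ |g^{1/d} - f^{1/d}|)^d`; subtracting `μ(𝒞_ε)` gives the estimate.

Brunn–Minkowski is proved in its multiplicative form for compact sets, by induction on the
dimension: slicing along the first coordinate reduces it to the one-dimensional Prékopa–Leindler
inequality, which follows by the layer-cake formula from `|S| + |T| ≤ |S + T|` on the line.
-/

open Set
open scoped ENNReal Pointwise

lemma volume_add_volume_le_volume_add_of_isCompact {K L : Set ℝ} (hK : IsCompact K)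
    (hL : IsCompact L) (hK₀ : K.Nonempty) (hL₀ : L.Nonempty) :
    volume K + volume L ≤ volume (K + L) := by
  set a := sSup K
  set b := sInf L
  have ha : a ∈ K := hK.sSup_mem hK₀
  have hb : b ∈ L := hL.sInf_mem hL₀
  -- `b +ᵥ K` ends and `a +ᵥ L` starts at `a + b`.
  have hinter : (b +ᵥ K) ∩ (a +ᵥ L) ⊆ {a + b} := by
    rintro _ ⟨⟨k, hk, rfl⟩, ⟨l, hl, hlk⟩⟩
    have : k ≤ a := le_csSup hK.bddAbove hk
    have : b ≤ l := csInf_le hL.bddBelow hl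
    simp only [vadd_eq_add] at hlk ⊢
    exact mem_singleton_iff.2 (by linarith)
  calc volume K + volume L = volume (b +ᵥ K) + volume (a +ᵥ L) := by
        rw [measure_vadd, measure_vadd]
    _ = volume ((b +ᵥ K) ∪ (a +ᵥ L)) := by
        rw [← measure_union_add_inter _ (hL.vadd a).measurableSet,
          measure_mono_null hinter (measure_singleton _), add_zero]
    _ ≤ volume (K + L) :=
        measure_mono (union_subset (add_comm L K ▸ vadd_set_subset_add hb)
          (vadd_set_subset_add ha))

lemma volume_add_volume_le_volume_add {S T : Set ℝ} (hS : MeasurableSet S)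
    (hT : MeasurableSet T) (hS₀ : S.Nonempty) (hT₀ : T.Nonempty) :
    volume S + volume T ≤ volume (S + T) := by
  obtain ⟨s, hs⟩ := hS₀
  obtain ⟨t, ht⟩ := hT₀
  rw [hS.measure_eq_iSup_isCompact, hT.measure_eq_iSup_isCompact]
  simp only [iSup_and']
  refine ENNReal.biSup_add_biSup_le' ⟨∅, empty_subset _, isCompact_empty⟩
    ⟨∅, empty_subset _, isCompact_empty⟩ fun K ⟨hKS, hK⟩ L ⟨hLT, hL⟩ => ?_
  calc volume K + volume L ≤ volume (insert s K) + volume (insert t L) :=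
        add_le_add (measure_mono (subset_insert _ _)) (measure_mono (subset_insert _ _))
    _ ≤ volume (insert s K + insert t L) :=
        volume_add_volume_le_volume_add_of_isCompact (hK.insert s) (hL.insert t)
          (insert_nonempty _ _) (insert_nonempty _ _)
    _ ≤ volume (S + T) :=
        measure_mono (add_subset_add (insert_subset hs hKS) (insert_subset ht hLT))

lemma ofReal_mul_volume_add_ofReal_mul_volume_le {t : ℝ} (ht₀ : 0 < t) (ht₁ : t < 1)
    {S T U : Set ℝ} (hS : MeasurableSet S) (hT : MeasurableSet T) (hS₀ : S.Nonempty)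
    (hT₀ : T.Nonempty) (hU : (1 - t) • S + t • T ⊆ U) :
    ENNReal.ofReal (1 - t) * volume S + ENNReal.ofReal t * volume T ≤ volume U := by
  have hsmul {r : ℝ} (hr : 0 ≤ r) (X : Set ℝ) : volume (r • X) = ENNReal.ofReal r * volume X := by
    rw [Measure.addHaar_smul_of_nonneg _ hr, Module.finrank_self, pow_one]
  rw [← hsmul (sub_pos.2 ht₁).le, ← hsmul ht₀.le]
  exact (volume_add_volume_le_volume_add (hS.const_smul₀ _) (hT.const_smul₀ _) hS₀.smul_set
    hT₀.smul_set).trans (measure_mono hU)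

lemma ENNReal.rpow_one_sub_mul_rpow_le_add {t : ℝ} (ht₀ : 0 < t) (ht₁ : t < 1) (a b : ℝ≥0∞) :
    a ^ (1 - t) * b ^ t ≤ ENNReal.ofReal (1 - t) * a + ENNReal.ofReal t * b := by
  have h := ENNReal.young_inequality (a ^ (1 - t)) (b ^ t)
    (Real.HolderConjugate.inv_inv (sub_pos.2 ht₁) ht₀ (sub_add_cancel 1 t))
  rwa [← ENNReal.rpow_mul, ← ENNReal.rpow_mul, mul_inv_cancel₀ (sub_pos.2 ht₁).ne',
    mul_inv_cancel₀ ht₀.ne', ENNReal.rpow_one, ENNReal.rpow_one, div_eq_mul_inv,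
    div_eq_mul_inv, ENNReal.ofReal_inv_of_pos (sub_pos.2 ht₁),
    ENNReal.ofReal_inv_of_pos ht₀, inv_inv, inv_inv, mul_comm a, mul_comm b] at h

lemma ENNReal.min_le_rpow_one_sub_mul_rpow {t : ℝ} (ht₀ : 0 < t) (ht₁ : t < 1) (a b : ℝ≥0∞) :
    min a b ≤ a ^ (1 - t) * b ^ t :=
  calc min a b = min a b ^ (1 - t) * min a b ^ t := by
        rw [← ENNReal.rpow_add_of_nonneg _ _ (sub_pos.2 ht₁).le ht₀.le, sub_add_cancel,
          ENNReal.rpow_one]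
    _ ≤ a ^ (1 - t) * b ^ t := by
        gcongr
        exacts [min_le_left _ _, min_le_right _ _]

lemma lintegral_eq_setLIntegral_Ioo_measure_lt {α : Type*} [MeasurableSpace α] (μ : Measure α)
    {φ : α → ℝ≥0∞} (hφ : Measurable φ) (hφ₁ : ∀ x, φ x ≤ 1) :
    ∫⁻ x, φ x ∂μ = ∫⁻ c in Ioo 0 1, μ {x | ENNReal.ofReal c < φ x} := by
  have hφ_ne_top x : φ x ≠ ∞ := ((hφ₁ x).trans_lt ENNReal.one_lt_top).ne
  have hlevel : ∀ c ∈ Ioi (0 : ℝ), μ {x | c < (φ x).toReal} =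
      (Iio 1).indicator (fun c => μ {x | ENNReal.ofReal c < φ x}) c := by
    intro c hc
    by_cases hc₁ : c < 1
    · simp only [indicator_of_mem (mem_Iio.2 hc₁),
        ← ENNReal.ofReal_lt_iff_lt_toReal (le_of_lt hc) (hφ_ne_top _)]
    · rw [indicator_of_notMem (show c ∉ Iio 1 from hc₁)]
      refine measure_mono_null (fun x hx => ?_) measure_empty
      exact not_lt.2 ((ENNReal.toReal_le_of_le_ofReal zero_le_one (by simpa using hφ₁ x)).trans
        (not_lt.1 hc₁)) hx
  calc ∫⁻ x, φ x ∂μ = ∫⁻ x, ENNReal.ofReal (φ x).toReal ∂μ := by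
        simp only [ENNReal.ofReal_toReal (hφ_ne_top _)]
    _ = ∫⁻ c in Ioi 0, μ {x | c < (φ x).toReal} :=
        lintegral_eq_lintegral_meas_lt μ (ae_of_all _ fun _ => ENNReal.toReal_nonneg)
          hφ.ennreal_toReal.aemeasurable
    _ = ∫⁻ c in Ioo 0 1, μ {x | ENNReal.ofReal c < φ x} := by
        rw [setLIntegral_congr_fun measurableSet_Ioi hlevel,
          setLIntegral_indicator measurableSet_Iio, Iio_inter_Ioi]

lemma prekopa_leindler_of_iSup_eq_one {t : ℝ} (ht₀ : 0 < t) (ht₁ : t < 1)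
    {F G H : ℝ → ℝ≥0∞} (hF : Measurable F) (hG : Measurable G) (hH : Measurable H)
    (hF₁ : ⨆ x, F x = 1) (hG₁ : ⨆ x, G x = 1)
    (hFGH : ∀ x y, F x ^ (1 - t) * G y ^ t ≤ H ((1 - t) * x + t * y)) :
    (∫⁻ x, F x) ^ (1 - t) * (∫⁻ x, G x) ^ t ≤ ∫⁻ x, H x := by
  set H₁ : ℝ → ℝ≥0∞ := fun z => min (H z) 1
  have hH₁ : Measurable H₁ := hH.min measurable_const
  have hle_one {Φ : ℝ → ℝ≥0∞} (hΦ : ⨆ x, Φ x = 1) x : Φ x ≤ 1 := hΦ ▸ le_iSup Φ x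
  have hlevel_nonempty {Φ : ℝ → ℝ≥0∞} (hΦ : ⨆ x, Φ x = 1) {c : ℝ} (hc : c < 1) :
      {x | ENNReal.ofReal c < Φ x}.Nonempty :=
    let ⟨x, hx⟩ := lt_iSup_iff.1 (hΦ ▸ ENNReal.ofReal_lt_one.2 hc); ⟨x, hx⟩
  have hlevel_measurable {Φ : ℝ → ℝ≥0∞} (hΦ : Measurable Φ) (c : ℝ) :
      MeasurableSet {x | ENNReal.ofReal c < Φ x} :=
    measurableSet_lt measurable_const hΦ
  have hvolume_measurable (Φ : ℝ → ℝ≥0∞) :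
      Measurable fun c : ℝ => volume {x | ENNReal.ofReal c < Φ x} :=
    Antitone.measurable fun c c' hcc' =>
      measure_mono fun x hx => (ENNReal.ofReal_le_ofReal hcc').trans_lt hx
  have hlevel : ∀ c ∈ Ioo (0 : ℝ) 1,
      ENNReal.ofReal (1 - t) * volume {x | ENNReal.ofReal c < F x}
        + ENNReal.ofReal t * volume {x | ENNReal.ofReal c < G x}
        ≤ volume {z | ENNReal.ofReal c < H₁ z} := by
    rintro c ⟨-, hc₁⟩
    refine ofReal_mul_volume_add_ofReal_mul_volume_le ht₀ ht₁ (hlevel_measurable hF c)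
      (hlevel_measurable hG c) (hlevel_nonempty hF₁ hc₁) (hlevel_nonempty hG₁ hc₁) ?_
    rintro _ ⟨_, ⟨x, hx, rfl⟩, _, ⟨y, hy, rfl⟩, rfl⟩
    refine lt_min ((lt_min hx hy).trans_le ?_) (ENNReal.ofReal_lt_one.2 hc₁)
    exact (ENNReal.min_le_rpow_one_sub_mul_rpow ht₀ ht₁ _ _).trans (hFGH x y)
  calc (∫⁻ x, F x) ^ (1 - t) * (∫⁻ x, G x) ^ t
      ≤ ENNReal.ofReal (1 - t) * (∫⁻ x, F x) + ENNReal.ofReal t * ∫⁻ x, G x :=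
        ENNReal.rpow_one_sub_mul_rpow_le_add ht₀ ht₁ _ _
    _ = ∫⁻ c in Ioo 0 1, (ENNReal.ofReal (1 - t) * volume {x | ENNReal.ofReal c < F x}
          + ENNReal.ofReal t * volume {x | ENNReal.ofReal c < G x}) := by
        rw [lintegral_add_left ((hvolume_measurable F).const_mul _),
          lintegral_const_mul _ (hvolume_measurable F),
          lintegral_const_mul _ (hvolume_measurable G),
          lintegral_eq_setLIntegral_Ioo_measure_lt _ hF (hle_one hF₁),
          lintegral_eq_setLIntegral_Ioo_measure_lt _ hG (hle_one hG₁)]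
    _ ≤ ∫⁻ c in Ioo 0 1, volume {z | ENNReal.ofReal c < H₁ z} :=
        setLIntegral_mono (hvolume_measurable H₁) hlevel
    _ = ∫⁻ z, H₁ z :=
        (lintegral_eq_setLIntegral_Ioo_measure_lt _ hH₁ fun _ => min_le_right _ _).symm
    _ ≤ ∫⁻ z, H z := lintegral_mono fun _ => min_le_left _ _

theorem prekopa_leindler_one_dim {t : ℝ} (ht₀ : 0 < t) (ht₁ : t < 1)
    {f g h : ℝ → ℝ≥0∞} (hf : Measurable f) (hg : Measurable g) (hh : Measurable h)
    (hf_bdd : ⨆ x, f x ≠ ∞) (hg_bdd : ⨆ x, g x ≠ ∞)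
    (hfgh : ∀ x y, f x ^ (1 - t) * g y ^ t ≤ h ((1 - t) * x + t * y)) :
    (∫⁻ x, f x) ^ (1 - t) * (∫⁻ x, g x) ^ t ≤ ∫⁻ x, h x := by
  set a := ⨆ x, f x
  set b := ⨆ x, g x
  rcases eq_or_ne a 0 with ha | ha
  · simp [show f = 0 from funext fun x => ENNReal.iSup_eq_zero.1 ha x, sub_pos.2 ht₁]
  rcases eq_or_ne b 0 with hb | hb
  · simp [show g = 0 from funext fun x => ENNReal.iSup_eq_zero.1 hb x, ht₀]
  have ha_rpow : a ^ (1 - t) ≠ ∞ := ENNReal.rpow_ne_top_of_nonneg (sub_pos.2 ht₁).le hf_bdd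
  have hb_rpow : b ^ t ≠ ∞ := ENNReal.rpow_ne_top_of_nonneg ht₀.le hg_bdd
  set c := a ^ (1 - t) * b ^ t
  have hc : c ≠ 0 := mul_ne_zero (ENNReal.rpow_pos (pos_iff_ne_zero.2 ha) hf_bdd).ne'
    (ENNReal.rpow_pos (pos_iff_ne_zero.2 hb) hg_bdd).ne'
  have hnormalize (u v : ℝ≥0∞) :
      (u * a⁻¹) ^ (1 - t) * (v * b⁻¹) ^ t = u ^ (1 - t) * v ^ t * c⁻¹ := by
    rw [ENNReal.mul_rpow_of_nonneg _ _ (sub_pos.2 ht₁).le, ENNReal.mul_rpow_of_nonneg _ _ ht₀.le,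
      ENNReal.inv_rpow, ENNReal.inv_rpow, mul_mul_mul_comm,
      ← ENNReal.mul_inv (.inr hb_rpow) (.inl ha_rpow)]
  have key := prekopa_leindler_of_iSup_eq_one ht₀ ht₁ (hf.mul_const a⁻¹) (hg.mul_const b⁻¹)
    (hh.mul_const c⁻¹) (by rw [← ENNReal.iSup_mul, ENNReal.mul_inv_cancel ha hf_bdd])
    (by rw [← ENNReal.iSup_mul, ENNReal.mul_inv_cancel hb hg_bdd])
    fun x y => (hnormalize (f x) (g y)).trans_le (mul_le_mul_left (hfgh x y) _)
  rwa [lintegral_mul_const _ hf, lintegral_mul_const _ hg, lintegral_mul_const _ hh, hnormalize,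
    ENNReal.mul_le_mul_iff_left (ENNReal.inv_ne_zero.2 (ENNReal.mul_ne_top ha_rpow hb_rpow))
      (ENNReal.inv_ne_top.2 hc)] at key

def MulBrunnMinkowski {E : Type*} [AddCommGroup E] [Module ℝ E] [TopologicalSpace E]
    [MeasurableSpace E] (μ : Measure E) : Prop :=
  ∀ t : ℝ, 0 < t → t < 1 → ∀ A B : Set E, IsCompact A → IsCompact B →
    μ A ^ (1 - t) * μ B ^ t ≤ μ ((1 - t) • A + t • B)

lemma IsCompact.preimage_prodMk {X Y : Type*} [TopologicalSpace X] [TopologicalSpace Y]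
    [T1Space X] {S : Set (X × Y)} (hS : IsCompact S) (x : X) : IsCompact (Prod.mk x ⁻¹' S) := by
  refine Topology.IsClosedEmbedding.isCompact_preimage ⟨isEmbedding_prodMkRight x, ?_⟩ hS
  convert (show IsClosed ({x} : Set X) from isClosed_singleton).preimage continuous_fst
  ext ⟨a, b⟩
  simp [eq_comm]

namespace MulBrunnMinkowski

variable {E F : Type*} [AddCommGroup E] [Module ℝ E] [TopologicalSpace E] [MeasurableSpace E]

theorem of_subsingleton [Subsingleton E] (μ : Measure E) : MulBrunnMinkowski μ := by
  intro t ht₀ ht₁ A B _ _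
  rcases A.eq_empty_or_nonempty with rfl | hA
  · simp [sub_pos.2 ht₁]
  rcases B.eq_empty_or_nonempty with rfl | hB
  · simp [ht₀]
  rw [(hA.smul_set.add hB.smul_set).eq_univ, hA.eq_univ, hB.eq_univ,
    ← ENNReal.rpow_add_of_nonneg _ _ (sub_pos.2 ht₁).le ht₀.le, sub_add_cancel, ENNReal.rpow_one]

theorem map [AddCommGroup F] [Module ℝ F] [TopologicalSpace F] [MeasurableSpace F]
    [ContinuousAdd F] [ContinuousSMul ℝ F] [T2Space F] [OpensMeasurableSpace F]
    {μ : Measure E} {ν : Measure F} (h : MulBrunnMinkowski μ) (e : E ≃L[ℝ] F)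
    (he : MeasurePreserving e μ ν) : MulBrunnMinkowski ν := by
  intro t ht₀ ht₁ A B hA hB
  have hν {S : Set F} (hS : IsCompact S) : ν S = μ (e.symm '' S) := by
    rw [e.image_symm_eq_preimage, he.measure_preimage hS.measurableSet.nullMeasurableSet]
  rw [hν hA, hν hB, hν ((hA.smul _).add (hB.smul _)), image_add, image_smul_set, image_smul_set]
  exact h t ht₀ ht₁ _ _ (hA.image e.symm.continuous) (hB.image e.symm.continuous)

theorem volume_prod [NormedAddCommGroup F] [NormedSpace ℝ F] [MeasurableSpace F] [BorelSpace F]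
    [SecondCountableTopology F] {μ : Measure F} [SFinite μ] [IsFiniteMeasureOnCompacts μ]
    (h : MulBrunnMinkowski μ) : MulBrunnMinkowski ((volume : Measure ℝ).prod μ) := by
  intro t ht₀ ht₁ A B hA hB
  have hC : IsCompact ((1 - t) • A + t • B) := (hA.smul _).add (hB.smul _)
  have hslice_bdd {S : Set (ℝ × F)} (hS : IsCompact S) : ⨆ x, μ (Prod.mk x ⁻¹' S) ≠ ∞ :=
    ((iSup_le fun x => measure_mono (show Prod.mk x ⁻¹' S ⊆ Prod.snd '' S from
      fun y hy => ⟨(x, y), hy, rfl⟩)).trans_lt (hS.image continuous_snd).measure_lt_top).ne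
  rw [Measure.prod_apply hA.measurableSet, Measure.prod_apply hB.measurableSet,
    Measure.prod_apply hC.measurableSet]
  refine prekopa_leindler_one_dim ht₀ ht₁ (measurable_measure_prodMk_left hA.measurableSet)
    (measurable_measure_prodMk_left hB.measurableSet)
    (measurable_measure_prodMk_left hC.measurableSet) (hslice_bdd hA) (hslice_bdd hB)
    fun x y => (h t ht₀ ht₁ _ _ (hA.preimage_prodMk x) (hB.preimage_prodMk y)).trans
      (measure_mono ?_)
  rintro _ ⟨_, ⟨a, ha, rfl⟩, _, ⟨b, hb, rfl⟩, rfl⟩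
  exact ⟨(1 - t) • (x, a), smul_mem_smul_set ha, t • (y, b), smul_mem_smul_set hb, by simp⟩

end MulBrunnMinkowski

theorem measurePreserving_finConsEquivL (d : ℕ) :
    MeasurePreserving (Fin.consEquivL ℝ fun _ : Fin (d + 1) => ℝ) (volume.prod volume) volume := by
  rw [← Measure.volume_eq_prod]
  convert (volume_preserving_piFinSuccAbove (fun _ : Fin (d + 1) => ℝ) 0).symm using 1
  · rfl
  · ext p i
    simp [MeasurableEquiv.piFinSuccAbove_symm_apply]

theorem mulBrunnMinkowski_volume_pi (d : ℕ) :
    MulBrunnMinkowski (volume : Measure (Fin d → ℝ)) := by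
  induction d with
  | zero => exact .of_subsingleton _
  | succ d ih => exact ih.volume_prod.map _ (measurePreserving_finConsEquivL d)

theorem mulBrunnMinkowski_volume_euclideanSpace (d : ℕ) :
    MulBrunnMinkowski (volume : Measure (EuclideanSpace ℝ (Fin d))) :=
  (mulBrunnMinkowski_volume_pi d).map (EuclideanSpace.equiv (Fin d) ℝ).symm
    (PiLp.volume_preserving_toLp (Fin d))

section AddHaar

variable {E : Type*} [NormedAddCommGroup E] [NormedSpace ℝ E] [MeasurableSpace E] [BorelSpace E]
  [FiniteDimensional ℝ E] {μ : Measure E} [μ.IsAddHaarMeasure]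

lemma toReal_addHaar_smul_of_nonneg {r : ℝ} (hr : 0 ≤ r) (S : Set E) :
    (μ (r • S)).toReal = r ^ Module.finrank ℝ E * (μ S).toReal := by
  rw [Measure.addHaar_smul_of_nonneg μ hr, ENNReal.toReal_mul,
    ENNReal.toReal_ofReal (pow_nonneg hr _)]

lemma toReal_measure_le_add_left {A B : Set E} (hA : A.Nonempty) (hAB : μ (A + B) ≠ ∞) :
    (μ B).toReal ≤ (μ (A + B)).toReal := by
  obtain ⟨a, ha⟩ := hA
  exact ENNReal.toReal_mono hAB ((measure_vadd μ a B).symm.trans_le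
    (measure_mono (vadd_set_subset_add ha)))

lemma toReal_measure_le_add_right {A B : Set E} (hB : B.Nonempty) (hAB : μ (A + B) ≠ ∞) :
    (μ A).toReal ≤ (μ (A + B)).toReal := by
  rw [add_comm] at hAB ⊢
  exact toReal_measure_le_add_left hB hAB

theorem brunn_minkowski (hμ : MulBrunnMinkowski μ) (hE : 0 < Module.finrank ℝ E) {A B : Set E}
    (hA : IsCompact A) (hB : IsCompact B) (hA₀ : A.Nonempty) (hB₀ : B.Nonempty) :
    (μ A).toReal ^ (Module.finrank ℝ E : ℝ)⁻¹ + (μ B).toReal ^ (Module.finrank ℝ E : ℝ)⁻¹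
      ≤ (μ (A + B)).toReal ^ (Module.finrank ℝ E : ℝ)⁻¹ := by
  set n := Module.finrank ℝ E
  have hn : (n : ℝ)⁻¹ ≠ 0 := inv_ne_zero (Nat.cast_ne_zero.2 hE.ne')
  have hAB : μ (A + B) ≠ ∞ := (hA.add hB).measure_lt_top.ne
  have hrpow_mono {x : ℝ} (hx : 0 ≤ x) (hxy : x ≤ (μ (A + B)).toReal) :
      x ^ (n : ℝ)⁻¹ ≤ (μ (A + B)).toReal ^ (n : ℝ)⁻¹ :=
    Real.rpow_le_rpow hx hxy (by positivity)
  rcases (ENNReal.toReal_nonneg (a := μ A)).eq_or_lt with hA0 | hA0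
  · rw [← hA0, Real.zero_rpow hn, zero_add]
    exact hrpow_mono ENNReal.toReal_nonneg (toReal_measure_le_add_left hA₀ hAB)
  rcases (ENNReal.toReal_nonneg (a := μ B)).eq_or_lt with hB0 | hB0
  · rw [← hB0, Real.zero_rpow hn, add_zero]
    exact hrpow_mono ENNReal.toReal_nonneg (toReal_measure_le_add_right hB₀ hAB)
  -- Rescale `A` and `B` to unit volume and apply the multiplicative form.
  set α := (μ A).toReal ^ (n : ℝ)⁻¹
  set β := (μ B).toReal ^ (n : ℝ)⁻¹
  have hα : 0 < α := Real.rpow_pos_of_pos hA0 _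
  have hβ : 0 < β := Real.rpow_pos_of_pos hB0 _
  have hunit {S : Set E} (hS : 0 < (μ S).toReal) : μ (((μ S).toReal ^ (n : ℝ)⁻¹)⁻¹ • S) = 1 := by
    rw [← ENNReal.toReal_eq_one_iff, toReal_addHaar_smul_of_nonneg (by positivity), inv_pow,
      Real.rpow_inv_natCast_pow hS.le hE.ne', inv_mul_cancel₀ hS.ne']
  set t := β / (α + β)
  have ht₀ : 0 < t := by positivity
  have ht₁ : t < 1 := (div_lt_one (by positivity)).2 (by linarith)
  have hcomb : (1 - t) • α⁻¹ • A + t • β⁻¹ • B = (α + β)⁻¹ • (A + B) := by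
    have h₁ : (1 - t) * α⁻¹ = (α + β)⁻¹ := by
      simp only [t]
      field_simp
      ring
    have h₂ : t * β⁻¹ = (α + β)⁻¹ := by
      simp only [t]
      field_simp
    rw [smul_smul, smul_smul, h₁, h₂, smul_add]
  have key := hμ t ht₀ ht₁ _ _ (hA.smul α⁻¹) (hB.smul β⁻¹)
  rw [hunit hA0, hunit hB0, ENNReal.one_rpow, ENNReal.one_rpow, one_mul, hcomb] at key
  replace key := ENNReal.toReal_mono ((hA.add hB).smul _).measure_lt_top.ne key
  rw [ENNReal.toReal_one, toReal_addHaar_smul_of_nonneg (by positivity), inv_pow,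
    le_inv_mul_iff₀ (by positivity), mul_one] at key
  calc α + β = ((α + β) ^ n) ^ (n : ℝ)⁻¹ :=
        (Real.pow_rpow_inv_natCast (by positivity) hE.ne').symm
    _ ≤ (μ (A + B)).toReal ^ (n : ℝ)⁻¹ := hrpow_mono (by positivity) key

end AddHaar

section Nodal

variable {d : ℕ}

lemma isClosed_nodalSubdiff (N : Finset (Euc d)) (u : Euc d → ℝ) (z : Euc d) :
    IsClosed (nodalSubdiff N u z) := by
  simp only [nodalSubdiff, ofPred_forall]
  exact isClosed_biInter fun y _ =>
    isClosed_le (continuous_const.add (continuous_id.inner continuous_const)) continuous_const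

/-- On the convex hull `⟪p, x - z⟫ ≤ ∑ |u y - u z|`, and the hull contains a ball around `z`. -/
lemma isBounded_nodalSubdiff {N : Finset (Euc d)} (u : Euc d → ℝ) {z : Euc d}
    (hz : z ∈ interior (convexHull ℝ (N : Set (Euc d)))) :
    Bornology.IsBounded (nodalSubdiff N u z) := by
  obtain ⟨δ, hδ, hball⟩ := Metric.isOpen_iff.1 isOpen_interior z hz
  set M := ∑ y ∈ N, |u y - u z|
  refine (Metric.isBounded_closedBall (x := 0) (r := 2 * M / δ)).subset fun p hp => ?_
  have hhull : convexHull ℝ (N : Set (Euc d)) ⊆ {x | ⟪p, x - z⟫ ≤ M} := by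
    refine convexHull_min (fun y hy => ?_) ?_
    · have := hp y hy
      have := (le_abs_self _).trans (Finset.single_le_sum (f := fun y => |u y - u z|)
        (fun _ _ => abs_nonneg _) hy)
      simp only [mem_ofPred_eq]
      linarith
    · simp only [inner_sub_right, sub_le_iff_le_add]
      exact convex_halfSpace_le (innerₛₗ ℝ p).isLinear _
  rcases eq_or_ne p 0 with rfl | hp0
  · simp only [Metric.mem_closedBall, dist_self]
    have : 0 ≤ M := Finset.sum_nonneg fun _ _ => abs_nonneg _
    positivity
  have hpn : 0 < ‖p‖ := norm_pos_iff.2 hp0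
  have hx : z + (δ / 2 / ‖p‖) • p ∈ Metric.ball z δ := by
    rw [Metric.mem_ball, dist_eq_norm, add_sub_cancel_left, norm_smul, Real.norm_eq_abs,
      abs_of_pos (by positivity), div_mul_cancel₀ _ hpn.ne']
    linarith
  have hM := hhull (interior_subset (hball hx))
  simp only [mem_ofPred_eq, add_sub_cancel_left, real_inner_smul_right,
    real_inner_self_eq_norm_sq] at hM
  have : δ / 2 / ‖p‖ * ‖p‖ ^ 2 = δ * ‖p‖ / 2 := by
    field_simp
  rw [Metric.mem_closedBall, dist_zero_right, le_div_iff₀ hδ]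
  linarith

lemma isCompact_nodalSubdiff {N : Finset (Euc d)} (u : Euc d → ℝ) {z : Euc d}
    (hz : z ∈ interior (convexHull ℝ (N : Set (Euc d)))) :
    IsCompact (nodalSubdiff N u z) :=
  Metric.isCompact_of_isClosed_isBounded (isClosed_nodalSubdiff N u z)
    (isBounded_nodalSubdiff u hz)

/-- Subgradients at two distinct nodes lie on a common hyperplane. -/
lemma volume_nodalSubdiff_inter_nodalSubdiff {N : Finset (Euc d)} (u : Euc d → ℝ)
    {z z' : Euc d} (hz : z ∈ N) (hz' : z' ∈ N) (hne : z ≠ z') :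
    volume (nodalSubdiff N u z ∩ nodalSubdiff N u z') = 0 := by
  set K := LinearMap.ker (innerₛₗ ℝ (z' - z))
  have hK : K ≠ ⊤ := by
    intro h
    have : z' - z ∈ K := h ▸ Submodule.mem_top
    exact sub_ne_zero.2 hne.symm (inner_self_eq_zero.1 this)
  rcases (nodalSubdiff N u z ∩ nodalSubdiff N u z').eq_empty_or_nonempty with h | ⟨p₀, hp₀⟩
  · rw [h, measure_empty]
  have hplane (p) (hp : p ∈ nodalSubdiff N u z ∩ nodalSubdiff N u z') :
      ⟪z' - z, p⟫ = u z' - u z := by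
    have h₁ := hp.1 z' hz'
    have h₂ := hp.2 z hz
    rw [← neg_sub z' z, inner_neg_right] at h₂
    rw [real_inner_comm]
    linarith
  have hplane_ne_top : AffineSubspace.mk' p₀ K ≠ ⊤ := fun h => hK <| by
    rw [← AffineSubspace.direction_mk' p₀ K, h, AffineSubspace.direction_top]
  refine measure_mono_null (fun p hp => ?_)
    (Measure.addHaar_affineSubspace volume _ hplane_ne_top)
  rw [SetLike.mem_coe, AffineSubspace.mem_mk', LinearMap.mem_ker]
  change ⟪z' - z, p - p₀⟫ = 0
  rw [inner_sub_right, hplane p hp, hplane p₀ hp₀, sub_self]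

lemma smul_nodalSubdiff_subset (N : Finset (Euc d)) (u : Euc d → ℝ) (z : Euc d) {c : ℝ}
    (hc : 0 ≤ c) : c • nodalSubdiff N u z ⊆ nodalSubdiff N (fun x => c * u x) z := by
  rintro _ ⟨p, hp, rfl⟩ y hy
  rw [real_inner_smul_left, ← mul_add]
  exact mul_le_mul_of_nonneg_left (hp y hy) hc

lemma nodalSubdiff_sub_add_smul_subset (N : Finset (Euc d)) (u v : Euc d → ℝ) (z : Euc d)
    {c : ℝ} (hc : 0 ≤ c) :
    nodalSubdiff N (fun x => u x - c * v x) z + c • nodalSubdiff N v z ⊆ nodalSubdiff N u z := by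
  rintro _ ⟨p, hp, q, hq, rfl⟩ y hy
  have := smul_nodalSubdiff_subset N v z hc hq y hy
  have := hp y hy
  rw [inner_add_left]
  linarith

/-- Take `y` minimizing `w - ⟪p, ·⟫` over `NI`; the boundary nodes cannot do better, since
there `w - ⟪p, ·⟫ ≥ u - ⟪p, ·⟫ ≥ u z - ⟪p, z⟫ ≥ w z - ⟪p, z⟫`. -/
lemma exists_mem_nodalSubdiff_of_le {NI NB : Finset (Euc d)} {u w : Euc d → ℝ} {z p : Euc d}
    (hz : z ∈ NI) (hp : p ∈ nodalSubdiff (NI ∪ NB) u z) (hwz : w z ≤ u z)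
    (hB : ∀ y ∈ NB, u y ≤ w y) : ∃ y ∈ NI, p ∈ nodalSubdiff (NI ∪ NB) w y := by
  obtain ⟨y₀, hy₀, hmin⟩ := NI.exists_min_image (fun y => w y - ⟪p, y⟫) ⟨z, hz⟩
  refine ⟨y₀, hy₀, fun y hy => ?_⟩
  suffices w y₀ - ⟪p, y₀⟫ ≤ w y - ⟪p, y⟫ by rw [inner_sub_right]; linarith
  rcases Finset.mem_union.1 hy with hyI | hyB
  · exact hmin y hyI
  · have := hp y hy
    rw [inner_sub_right] at this
    linarith [hmin z hz, hB y hyB]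

lemma convEnv_eq_of_nodalSubdiff_nonempty {N : Finset (Euc d)} {w : Euc d → ℝ} {z : Euc d}
    (hz : z ∈ N) (h : (nodalSubdiff N w z).Nonempty) : convEnv N w z = w z := by
  obtain ⟨p, hp⟩ := h
  refine IsGreatest.csSup_eq ⟨⟨p, w z - ⟪p, z⟫, fun y hy => ?_, by ring⟩, ?_⟩
  · have := hp y hy
    rw [inner_sub_right] at this
    linarith
  · rintro _ ⟨q, c, hqc, rfl⟩
    exact hqc z hz

lemma sum_volume_nodalSubdiff_le {NI NB C : Finset (Euc d)} {u w : Euc d → ℝ} {ε : ℝ}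
    (hε : 0 < ε) (hI : ∀ z ∈ NI, w z ≤ ε * u z) (hB : ∀ y ∈ NB, ε * u y ≤ w y)
    (hC : ∀ y ∈ NI, (nodalSubdiff (NI ∪ NB) w y).Nonempty → y ∈ C) :
    ∑ z ∈ NI, volume (nodalSubdiff (NI ∪ NB) u z)
      ≤ ∑ y ∈ C, volume (ε⁻¹ • nodalSubdiff (NI ∪ NB) w y) := by
  have hcover : ⋃ z ∈ NI, nodalSubdiff (NI ∪ NB) u z
      ⊆ ⋃ y ∈ C, ε⁻¹ • nodalSubdiff (NI ∪ NB) w y := by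
    refine iUnion₂_subset fun z hz p hp => ?_
    obtain ⟨y, hy, hpy⟩ := exists_mem_nodalSubdiff_of_le hz
      (smul_nodalSubdiff_subset _ u z hε.le (smul_mem_smul_set hp)) (hI z hz) hB
    exact mem_biUnion (hC y hy ⟨_, hpy⟩) ⟨ε • p, hpy, inv_smul_smul₀ hε.ne' p⟩
  calc ∑ z ∈ NI, volume (nodalSubdiff (NI ∪ NB) u z)
      = volume (⋃ z ∈ NI, nodalSubdiff (NI ∪ NB) u z) :=
        (measure_biUnion_finset₀ (fun z hz z' hz' hne => volume_nodalSubdiff_inter_nodalSubdiff u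
          (Finset.mem_union_left _ hz) (Finset.mem_union_left _ hz') hne)
          fun z _ => (isClosed_nodalSubdiff _ u z).measurableSet.nullMeasurableSet).symm
    _ ≤ volume (⋃ y ∈ C, ε⁻¹ • nodalSubdiff (NI ∪ NB) w y) := measure_mono hcover
    _ ≤ ∑ y ∈ C, volume (ε⁻¹ • nodalSubdiff (NI ∪ NB) w y) := measure_biUnion_finset_le _ _

lemma toReal_volume_inv_smul_le {ε : ℝ} (hd : 1 ≤ d) (hε₀ : 0 < ε) (hε₁ : ε < 1)
    {W G F : Set (Euc d)} (hW : IsCompact W) (hG : IsCompact G) (hF : IsCompact F)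
    (hG₀ : G.Nonempty) (hsub : W + (1 - ε) • G ⊆ F) :
    (volume (ε⁻¹ • W)).toReal ≤ ((volume F).toReal ^ (1 / (d : ℝ)) + (ε / (1 - ε))⁻¹
      * |(volume G).toReal ^ (1 / (d : ℝ)) - (volume F).toReal ^ (1 / (d : ℝ))|) ^ d := by
  have hrank : Module.finrank ℝ (Euc d) = d := finrank_euclideanSpace_fin
  set f := (volume F).toReal
  set g := (volume G).toReal
  rcases W.eq_empty_or_nonempty with rfl | hW₀
  · simp only [smul_set_empty, measure_empty, ENNReal.toReal_zero]
    have : 0 ≤ f ^ (1 / (d : ℝ)) := by positivity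
    positivity
  have hbm := brunn_minkowski (mulBrunnMinkowski_volume_euclideanSpace d) (by rw [hrank]; omega)
    hW (hG.smul (1 - ε)) hW₀ hG₀.smul_set
  rw [toReal_addHaar_smul_of_nonneg (sub_pos.2 hε₁).le, hrank,
    Real.mul_rpow (by positivity) ENNReal.toReal_nonneg,
    Real.pow_rpow_inv_natCast (sub_pos.2 hε₁).le (by omega)] at hbm
  have hmono : (volume (W + (1 - ε) • G)).toReal ^ (d : ℝ)⁻¹ ≤ f ^ (d : ℝ)⁻¹ :=
    Real.rpow_le_rpow ENNReal.toReal_nonneg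
      (ENNReal.toReal_mono hF.measure_lt_top.ne (measure_mono hsub)) (by positivity)
  have key : ε⁻¹ * (volume W).toReal ^ (d : ℝ)⁻¹
      ≤ f ^ (d : ℝ)⁻¹ + (1 - ε) / ε * |g ^ (d : ℝ)⁻¹ - f ^ (d : ℝ)⁻¹| :=
    calc ε⁻¹ * (volume W).toReal ^ (d : ℝ)⁻¹
        ≤ ε⁻¹ * (f ^ (d : ℝ)⁻¹ - (1 - ε) * g ^ (d : ℝ)⁻¹) := by gcongr; linarith
      _ = f ^ (d : ℝ)⁻¹ + (1 - ε) / ε * (f ^ (d : ℝ)⁻¹ - g ^ (d : ℝ)⁻¹) := by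
        field_simp
        ring
      _ ≤ f ^ (d : ℝ)⁻¹ + (1 - ε) / ε * |g ^ (d : ℝ)⁻¹ - f ^ (d : ℝ)⁻¹| := by
        have : 0 < 1 - ε := sub_pos.2 hε₁
        rw [abs_sub_comm]
        gcongr
        exact le_abs_self _
  rw [one_div, inv_div, toReal_addHaar_smul_of_nonneg (by positivity), hrank,
    ← Real.rpow_inv_natCast_pow ENNReal.toReal_nonneg (by omega : d ≠ 0), ← mul_pow]
  exact pow_le_pow_left₀ (by positivity) key d

end Nodal

theorem measure_noncontact_first_estimate_general
    (d : ℕ) (hd : 1 ≤ d)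
    (NI NB : Finset (Euc d))
    (hint : ∀ z ∈ NI, z ∈ interior (convexHull ℝ ((NI ∪ NB : Finset (Euc d)) : Set (Euc d))))
    (uh vh : Euc d → ℝ)
    (hv : IsConvexNodal NI (NI ∪ NB) vh)
    (heqB : ∀ z ∈ NB, uh z = vh z) (hle : ∀ z ∈ NI, uh z ≤ vh z)
    (ε : ℝ) (hε0 : 0 < ε) (hε1 : ε < 1) :
    -- `f_i`, `g_i`, the contact set `𝒞_ε` and the non-contact set `S_ε`
    let f : Euc d → ℝ := fun z => (volume (nodalSubdiff (NI ∪ NB) uh z)).toReal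
    let g : Euc d → ℝ := fun z => (volume (nodalSubdiff (NI ∪ NB) vh z)).toReal
    let τ : ℝ := ε / (1 - ε)
    let Cε : Finset (Euc d) := NI.filter fun z =>
      convEnv (NI ∪ NB) (fun y => uh y - (1 - ε) * vh y) z = uh z - (1 - ε) * vh z
    ∑ z ∈ NI \ Cε, f z ≤
      (∑ z ∈ Cε, (f z ^ (1 / (d : ℝ))
        + τ⁻¹ * |g z ^ (1 / (d : ℝ)) - f z ^ (1 / (d : ℝ))|) ^ (d : ℕ))
      - ∑ z ∈ Cε, f z := by
  intro f g τ Cε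
  set w : Euc d → ℝ := fun y => uh y - (1 - ε) * vh y
  have hCε : Cε ⊆ NI := Finset.filter_subset _ _
  have hcompact (u : Euc d → ℝ) {z : Euc d} (hz : z ∈ NI) :
      IsCompact (nodalSubdiff (NI ∪ NB) u z) :=
    isCompact_nodalSubdiff u (hint z hz)
  have hcover := sum_volume_nodalSubdiff_le (u := uh) (w := w) (C := Cε) hε0
    (fun z hz => by
      have := mul_le_mul_of_nonneg_left (hle z hz) (sub_pos.2 hε1).le
      simp only [w]
      linarith)
    (fun y hy => by simp only [w, heqB y hy]; linarith)
    fun y hy hne => Finset.mem_filter.2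
      ⟨hy, convEnv_eq_of_nodalSubdiff_nonempty (Finset.mem_union_left _ hy) hne⟩
  have hfinite {y} (hy : y ∈ Cε) : volume (ε⁻¹ • nodalSubdiff (NI ∪ NB) w y) ≠ ∞ :=
    ((hcompact w (hCε hy)).smul _).measure_lt_top.ne
  have hsum : ∑ z ∈ NI, f z ≤ ∑ y ∈ Cε, (volume (ε⁻¹ • nodalSubdiff (NI ∪ NB) w y)).toReal := by
    rw [← ENNReal.toReal_sum fun z hz => (hcompact uh hz).measure_lt_top.ne,
      ← ENNReal.toReal_sum fun y hy => hfinite hy]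
    exact ENNReal.toReal_mono (ENNReal.sum_ne_top.2 fun y hy => hfinite hy) hcover
  have hnode (y) (hy : y ∈ Cε) := toReal_volume_inv_smul_le hd hε0 hε1
    (hcompact w (hCε hy)) (hcompact vh (hCε hy)) (hcompact uh (hCε hy)) (hv y (hCε hy))
    (nodalSubdiff_sub_add_smul_subset _ uh vh y (sub_pos.2 hε1).le)
  rw [← Finset.sum_sdiff hCε] at hsum
  linarith [Finset.sum_le_sum hnode]

/-- Measure of the non-contact set: first estimate, `μ(S_ε) ≤ ν_τ(𝒞_ε) − μ(𝒞_ε)`. -/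
theorem measure_noncontact_first_estimate
    (d : ℕ) (hd : 1 ≤ d)
    (Ω : Set (Euc d)) (hΩo : IsOpen Ω) (hΩb : Bornology.IsBounded Ω) (hΩc : Convex ℝ Ω)
    (NI NB : Finset (Euc d)) (hdisj : Disjoint NI NB)
    (hNI : (NI : Set (Euc d)) ⊆ Ω) (hNB : (NB : Set (Euc d)) ⊆ frontier Ω)
    (hint : ∀ z ∈ NI, z ∈ interior (convexHull ℝ ((NI ∪ NB : Finset (Euc d)) : Set (Euc d))))
    (uh vh : Euc d → ℝ)
    (hu : IsConvexNodal NI (NI ∪ NB) uh) (hv : IsConvexNodal NI (NI ∪ NB) vh)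
    (heqB : ∀ z ∈ NB, uh z = vh z) (hle : ∀ z ∈ NI, uh z ≤ vh z)
    (ε : ℝ) (hε0 : 0 < ε) (hε1 : ε < 1) :
    -- `f_i`, `g_i`, the contact set `𝒞_ε` and the non-contact set `S_ε`
    let f : Euc d → ℝ := fun z => (volume (nodalSubdiff (NI ∪ NB) uh z)).toReal
    let g : Euc d → ℝ := fun z => (volume (nodalSubdiff (NI ∪ NB) vh z)).toReal
    let τ : ℝ := ε / (1 - ε)
    let Cε : Finset (Euc d) := NI.filter fun z =>
      convEnv (NI ∪ NB) (fun y => uh y - (1 - ε) * vh y) z = uh z - (1 - ε) * vh z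
    ∑ z ∈ NI \ Cε, f z ≤
      (∑ z ∈ Cε, (f z ^ (1 / (d : ℝ))
        + τ⁻¹ * |g z ^ (1 / (d : ℝ)) - f z ^ (1 / (d : ℝ))|) ^ (d : ℕ))
      - ∑ z ∈ Cε, f z :=
  measure_noncontact_first_estimate_general d hd NI NB hint uh vh hv heqB hle ε hε0 hε1
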